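/- Among biSBM parameters with constant column-averaged connectivity δ_{+q} = d for all q (i.e. parameters in Θ^max_{d,n_r}), for any exponent t ≥ 1 and any l, m, m' with appropriate ranges, the quantity Σ_{q,q'} ρ_q ρ_{q'} η_q^{l-m'} η_{q'}^{l-m} η_{qq'}^{m+m'-l} is bounded below by (1-d)^{m+m'}, where η_q = 1-δ_{+q} = 1-d and η_{qq'} = Σ_k π_k (1-δ_{kq})(1-δ_{kq'}). Equality holds for the Erdős–Rényi parameters (δ_{kq} = d for all k,q). Consequently, among all parameters in Θ^max_{d,n_r}, the Erdős–Rényi parametrization minimizes the variance Var_A[\bar{R}(A,U)] of the robustness statistic. -/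
import Mathlib


open Finset

/-- Robustness of a bipartite network after `m` primary (row) extinctions
along the extinction sequence `s`. -/
noncomputable def rob {nr nc : ℕ} (A : Fin nr → Fin nc → Bool)
    (s : Equiv.Perm (Fin nr)) (m : ℕ) : ℝ :=
  1 - (nc : ℝ)⁻¹ *
    ∑ j : Fin nc,
      (if ∀ i : Fin nr, m ≤ (i : ℕ) → A (s i) j = false then (1 : ℝ) else 0)

/-- Robustness statistic of `A` under uniform extinction sequences:
average over the permutations and over `m = 0, ..., n_r`. -/
noncomputable def robStatU {nr nc : ℕ} (A : Fin nr → Fin nc → Bool) : ℝ :=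
  (nr : ℝ)⁻¹ *
    ∑ m ∈ Finset.range (nr + 1),
      ((Nat.factorial nr : ℝ))⁻¹ * ∑ s : Equiv.Perm (Fin nr), rob A s m

/-- biSBM probability of the incidence matrix `A`. -/
def biSBMprob {nr nc Qr Qc : ℕ} (p : Fin Qr → ℝ) (r : Fin Qc → ℝ)
    (δ : Fin Qr → Fin Qc → ℝ) (A : Fin nr → Fin nc → Bool) : ℝ :=
  ∑ Z : Fin nr → Fin Qr, ∑ W : Fin nc → Fin Qc,
    (∏ i, p (Z i)) * (∏ j, r (W j)) *
      ∏ i, ∏ j, (if A i j then δ (Z i) (W j) else 1 - δ (Z i) (W j))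

/-- Variance of the robustness statistic under a probability mass
function `P` on networks. -/
noncomputable def varRobStat {nr nc : ℕ}
    (P : (Fin nr → Fin nc → Bool) → ℝ) : ℝ :=
  (∑ A : Fin nr → Fin nc → Bool, P A * (robStatU A) ^ 2)
    - (∑ A : Fin nr → Fin nc → Bool, P A * robStatU A) ^ 2

/-- Bipartite Erdős–Rényi probability of the incidence matrix `A`. -/
def ERprob {nr nc : ℕ} (d : ℝ) (A : Fin nr → Fin nc → Bool) : ℝ :=
  ∏ i, ∏ j, (if A i j then d else 1 - d)


/-- indicator-product of "no edge" over a set of rows for a fixed column. -/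
noncomputable def ind {nr nc : ℕ} (S : Finset (Fin nr)) (j : Fin nc)
    (A : Fin nr → Fin nc → Bool) : ℝ :=
  ∏ i ∈ S, (if A i j then 0 else 1)

lemma sum_fun_factor {n Q : ℕ} (g : Fin n → Fin Q → ℝ) :
    ∑ Z : Fin n → Fin Q, ∏ i, g i (Z i) = ∏ i, ∑ k, g i k :=
  (Fintype.prod_sum _).symm

lemma sum_bool_matrix {nr nc : ℕ} (g : Fin nr → Fin nc → Bool → ℝ) :
    ∑ A : Fin nr → Fin nc → Bool, ∏ i, ∏ x, g i x (A i x)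
      = ∏ i, ∏ x, (g i x true + g i x false) := by
  symm
  calc ∏ i, ∏ x, (g i x true + g i x false)
      = ∏ i, ∏ x, ∑ b : Bool, g i x b := by
        refine Finset.prod_congr rfl fun i _ => Finset.prod_congr rfl fun x _ => ?_
        rw [Fintype.sum_bool]
    _ = ∏ i, ∑ B : Fin nc → Bool, ∏ x, g i x (B x) := by
        refine Finset.prod_congr rfl fun i _ => ?_
        rw [Fintype.prod_sum]
    _ = ∑ A : Fin nr → Fin nc → Bool, ∏ i, ∏ x, g i x (A i x) := by
        rw [Fintype.prod_sum]

lemma prod_if_two {nc : ℕ} {j j' : Fin nc} (hjj : j ≠ j') (a b : ℝ) :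
    (∏ x : Fin nc, if x = j then a else if x = j' then b else 1) = a * b := by
  have h : ∀ x : Fin nc, (if x = j then a else if x = j' then b else 1)
      = (if x = j then a else 1) * (if x = j' then b else 1) := by
    intro x
    by_cases h1 : x = j
    · subst h1; simp [hjj]
    · by_cases h2 : x = j' <;> simp [h1, h2, Ne.symm hjj]
  rw [Finset.prod_congr rfl fun x _ => h x, Finset.prod_mul_distrib]
  simp [Finset.prod_ite_eq']

lemma prod_if_one {nc : ℕ} (j : Fin nc) (a : ℝ) :
    (∏ x : Fin nc, if x = j then a else 1) = a := by
  simp [Finset.prod_ite_eq']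

lemma ind_eq_prod_ite {nr nc : ℕ} (T : Fin nc → Finset (Fin nr))
    (A : Fin nr → Fin nc → Bool) :
    ∏ x, ind (T x) x A
      = ∏ i, ∏ x, (if i ∈ T x then (if A i x then (0:ℝ) else 1) else 1) := by
  rw [Finset.prod_comm]
  refine Finset.prod_congr rfl fun x _ => ?_
  rw [ind]
  symm
  rw [Finset.prod_ite_mem, Finset.univ_inter]

lemma master_er {nr nc : ℕ} (d : ℝ) (T : Fin nc → Finset (Fin nr)) :
    ∑ A : Fin nr → Fin nc → Bool, ERprob d A * ∏ x, ind (T x) x A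
      = ∏ x, (1 - d) ^ (T x).card := by
  calc ∑ A : Fin nr → Fin nc → Bool, ERprob d A * ∏ x, ind (T x) x A
      = ∑ A : Fin nr → Fin nc → Bool, ∏ i, ∏ x,
          ((if A i x then d else 1 - d) *
            (if i ∈ T x then (if A i x then (0:ℝ) else 1) else 1)) := by
        refine Finset.sum_congr rfl fun A _ => ?_
        rw [ERprob, ind_eq_prod_ite, ← Finset.prod_mul_distrib]
        refine Finset.prod_congr rfl fun i _ => ?_
        rw [← Finset.prod_mul_distrib]
    _ = ∏ i, ∏ x, (if i ∈ T x then (1 - d) else 1) := by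
        rw [sum_bool_matrix (fun i x a => (if a then d else 1 - d) *
          (if i ∈ T x then (if a then (0:ℝ) else 1) else 1))]
        refine Finset.prod_congr rfl fun i _ => Finset.prod_congr rfl fun x _ => ?_
        by_cases h : i ∈ T x <;> simp [h] <;> ring
    _ = ∏ x, (1 - d) ^ (T x).card := by
        rw [Finset.prod_comm]
        refine Finset.prod_congr rfl fun x _ => ?_
        rw [Finset.prod_ite_mem, Finset.univ_inter, Finset.prod_const]

lemma master_bi {nr nc Qr Qc : ℕ} (p : Fin Qr → ℝ) (r : Fin Qc → ℝ)
    (δ : Fin Qr → Fin Qc → ℝ) (T : Fin nc → Finset (Fin nr)) :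
    ∑ A : Fin nr → Fin nc → Bool, biSBMprob p r δ A * ∏ x, ind (T x) x A
      = ∑ W : Fin nc → Fin Qc, (∏ x, r (W x)) *
          ∏ i, ∑ k, p k * ∏ x ∈ univ.filter (fun x => i ∈ T x), (1 - δ k (W x)) := by
  calc ∑ A : Fin nr → Fin nc → Bool, biSBMprob p r δ A * ∏ x, ind (T x) x A
      = ∑ A : Fin nr → Fin nc → Bool, ∑ Z : Fin nr → Fin Qr, ∑ W : Fin nc → Fin Qc,
          (∏ i, p (Z i)) * (∏ x, r (W x)) *
            ∏ i, ∏ x, ((if A i x then δ (Z i) (W x) else 1 - δ (Z i) (W x)) *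
              (if i ∈ T x then (if A i x then (0:ℝ) else 1) else 1)) := by
        refine Finset.sum_congr rfl fun A _ => ?_
        rw [biSBMprob, Finset.sum_mul]
        refine Finset.sum_congr rfl fun Z _ => ?_
        rw [Finset.sum_mul]
        refine Finset.sum_congr rfl fun W _ => ?_
        rw [mul_assoc]
        congr 1
        rw [ind_eq_prod_ite, ← Finset.prod_mul_distrib]
        refine Finset.prod_congr rfl fun i _ => ?_
        rw [← Finset.prod_mul_distrib]
    _ = ∑ Z : Fin nr → Fin Qr, ∑ W : Fin nc → Fin Qc,
          (∏ i, p (Z i)) * (∏ x, r (W x)) *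
            ∑ A : Fin nr → Fin nc → Bool,
            ∏ i, ∏ x, ((if A i x then δ (Z i) (W x) else 1 - δ (Z i) (W x)) *
              (if i ∈ T x then (if A i x then (0:ℝ) else 1) else 1)) := by
        rw [Finset.sum_comm]
        refine Finset.sum_congr rfl fun Z _ => ?_
        rw [Finset.sum_comm]
        refine Finset.sum_congr rfl fun W _ => ?_
        rw [Finset.mul_sum]
    _ = ∑ Z : Fin nr → Fin Qr, ∑ W : Fin nc → Fin Qc,
          (∏ i, p (Z i)) * (∏ x, r (W x)) *
            ∏ i, ∏ x, (if i ∈ T x then 1 - δ (Z i) (W x) else 1) := by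
        refine Finset.sum_congr rfl fun Z _ => Finset.sum_congr rfl fun W _ => ?_
        congr 1
        rw [sum_bool_matrix (fun i x a => (if a then δ (Z i) (W x) else 1 - δ (Z i) (W x)) *
          (if i ∈ T x then (if a then (0:ℝ) else 1) else 1))]
        refine Finset.prod_congr rfl fun i _ => Finset.prod_congr rfl fun x _ => ?_
        by_cases h : i ∈ T x <;> simp [h] <;> ring
    _ = ∑ W : Fin nc → Fin Qc, (∏ x, r (W x)) *
          ∑ Z : Fin nr → Fin Qr, ∏ i,
            (p (Z i) * ∏ x ∈ univ.filter (fun x => i ∈ T x), (1 - δ (Z i) (W x))) := by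
        rw [Finset.sum_comm]
        refine Finset.sum_congr rfl fun W _ => ?_
        rw [Finset.mul_sum]
        refine Finset.sum_congr rfl fun Z _ => ?_
        rw [Finset.prod_mul_distrib, ← mul_assoc]
        rw [mul_comm (∏ x, r (W x)) (∏ i, p (Z i))]
        congr 1
        refine Finset.prod_congr rfl fun i _ => ?_
        rw [Finset.prod_filter]
    _ = ∑ W : Fin nc → Fin Qc, (∏ x, r (W x)) *
          ∏ i, ∑ k, p k * ∏ x ∈ univ.filter (fun x => i ∈ T x), (1 - δ k (W x)) := by
        refine Finset.sum_congr rfl fun W _ => ?_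
        congr 1
        exact sum_fun_factor (fun i k => p k * ∏ x ∈ univ.filter (fun x => i ∈ T x), (1 - δ k (W x)))

lemma marg {nc Qc : ℕ} (r : Fin Qc → ℝ) (hr1 : ∑ q, r q = 1)
    {j j' : Fin nc} (hjj : j ≠ j') (H : Fin Qc → Fin Qc → ℝ) :
    ∑ W : Fin nc → Fin Qc, (∏ x, r (W x)) * H (W j) (W j')
      = ∑ q, ∑ q', r q * r q' * H q q' := by
  classical
  symm
  have key : ∀ q q' : Fin Qc, r q * r q'
      = ∑ W : Fin nc → Fin Qc, ∏ x,
          (if x = j then (if W x = q then r (W x) else 0)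
           else if x = j' then (if W x = q' then r (W x) else 0) else r (W x)) := by
    intro q q'
    rw [sum_fun_factor (fun x t => if x = j then (if t = q then r t else 0)
      else if x = j' then (if t = q' then r t else 0) else r t)]
    have h1 : ∀ x : Fin nc, (∑ t, if x = j then (if t = q then r t else 0)
        else if x = j' then (if t = q' then r t else 0) else r t)
        = (if x = j then r q else if x = j' then r q' else 1) := by
      intro x
      by_cases hx : x = j
      · simp [hx, Finset.sum_ite_eq']
      · by_cases hx' : x = j' <;> simp [hx, hx', Finset.sum_ite_eq', hr1]
    rw [Finset.prod_congr rfl fun x _ => h1 x, prod_if_two hjj]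
  calc ∑ q, ∑ q', r q * r q' * H q q'
      = ∑ q, ∑ q', ∑ W : Fin nc → Fin Qc, (∏ x,
          (if x = j then (if W x = q then r (W x) else 0)
           else if x = j' then (if W x = q' then r (W x) else 0) else r (W x))) * H q q' := by
        refine Finset.sum_congr rfl fun q _ => Finset.sum_congr rfl fun q' _ => ?_
        rw [key q q', Finset.sum_mul]
    _ = ∑ q, ∑ W : Fin nc → Fin Qc, ∑ q', (∏ x,
          (if x = j then (if W x = q then r (W x) else 0)
           else if x = j' then (if W x = q' then r (W x) else 0) else r (W x))) * H q q' :=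
        Finset.sum_congr rfl fun q _ => Finset.sum_comm
    _ = ∑ W : Fin nc → Fin Qc, ∑ q, ∑ q', (∏ x,
          (if x = j then (if W x = q then r (W x) else 0)
           else if x = j' then (if W x = q' then r (W x) else 0) else r (W x))) * H q q' :=
        Finset.sum_comm
    _ = ∑ W : Fin nc → Fin Qc, (∏ x, r (W x)) * H (W j) (W j') := by
        refine Finset.sum_congr rfl fun W _ => ?_
        have h2 : ∀ q q' : Fin Qc, (∏ x,
            (if x = j then (if W x = q then r (W x) else 0)
             else if x = j' then (if W x = q' then r (W x) else 0) else r (W x)))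
            = (∏ x, r (W x)) * ((if W j = q then 1 else 0) * (if W j' = q' then 1 else 0)) := by
          intro q q'
          have h3 : ∀ x : Fin nc, (if x = j then (if W x = q then r (W x) else 0)
              else if x = j' then (if W x = q' then r (W x) else 0) else r (W x))
              = r (W x) * ((if x = j then (if W j = q then (1:ℝ) else 0) else 1) *
                  (if x = j' then (if W j' = q' then (1:ℝ) else 0) else 1)) := by
            intro x
            by_cases hx : x = j
            · subst hx
              simp only [if_pos rfl, if_neg hjj]
              by_cases h : W x = q <;> simp [h]
            · by_cases hx' : x = j'
              · subst hx'
                simp only [if_pos rfl, if_neg hx]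
                by_cases h : W x = q' <;> simp [h]
              · simp [hx, hx']
          rw [Finset.prod_congr rfl fun x _ => h3 x, Finset.prod_mul_distrib]
          congr 1
          rw [Finset.prod_mul_distrib, prod_if_one, prod_if_one]
        simp only [h2]
        simp [mul_ite, ite_mul, mul_zero, zero_mul, mul_one, one_mul, Finset.sum_ite_eq]

lemma sum_p_one_sub {Qr Qc : ℕ} (p : Fin Qr → ℝ) (δ : Fin Qr → Fin Qc → ℝ)
    (hp1 : ∑ k, p k = 1) (d : ℝ) (hmax : ∀ q, (∑ k, p k * δ k q) = d) (q : Fin Qc) :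
    ∑ k, p k * (1 - δ k q) = 1 - d := by
  simp only [mul_sub, mul_one]
  rw [Finset.sum_sub_distrib, hp1, hmax q]

lemma ev_bi_two {nr nc Qr Qc : ℕ} (p : Fin Qr → ℝ) (r : Fin Qc → ℝ)
    (δ : Fin Qr → Fin Qc → ℝ) (hp1 : ∑ k, p k = 1) (hr1 : ∑ q, r q = 1)
    (d : ℝ) (hmax : ∀ q, (∑ k, p k * δ k q) = d)
    (η2 : Fin Qc → Fin Qc → ℝ)
    (hη2 : ∀ q q', η2 q q' = ∑ k, p k * (1 - δ k q) * (1 - δ k q'))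
    (S S' : Finset (Fin nr)) {j j' : Fin nc} (hjj : j ≠ j') :
    ∑ A : Fin nr → Fin nc → Bool, biSBMprob p r δ A * (ind S j A * ind S' j' A)
      = ∑ q, ∑ q', r q * r q' *
          ((1 - d) ^ (S \ S').card * ((1 - d) ^ (S' \ S).card * η2 q q' ^ (S ∩ S').card)) := by
  classical
  set T : Fin nc → Finset (Fin nr) :=
    fun x => if x = j then S else if x = j' then S' else ∅ with hT
  have hTind : ∀ A : Fin nr → Fin nc → Bool,
      ind S j A * ind S' j' A = ∏ x, ind (T x) x A := by
    intro A
    have h : ∀ x : Fin nc, ind (T x) x A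
        = (if x = j then ind S j A else if x = j' then ind S' j' A else 1) := by
      intro x
      by_cases hx : x = j
      · subst hx; simp [hT, hjj]
      · by_cases hx' : x = j'
        · subst hx'; simp [hT, hx]
        · simp [hT, hx, hx', ind]
    rw [Finset.prod_congr rfl fun x _ => h x, prod_if_two hjj]
  have hfac : ∀ (W : Fin nc → Fin Qc) (i : Fin nr),
      (∑ k, p k * ∏ x ∈ univ.filter (fun x => i ∈ T x), (1 - δ k (W x)))
      = (if i ∈ S ∩ S' then η2 (W j) (W j') else 1) *
        ((if i ∈ S \ S' then 1 - d else 1) * (if i ∈ S' \ S then 1 - d else 1)) := by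
    intro W i
    by_cases h1 : i ∈ S <;> by_cases h2 : i ∈ S'
    · have hf : univ.filter (fun x => i ∈ T x) = {j, j'} := by
        ext x
        simp only [Finset.mem_filter, Finset.mem_univ, true_and, Finset.mem_insert,
          Finset.mem_singleton, hT]
        by_cases hx : x = j
        · simp [hx, h1, hjj, Ne.symm hjj]
        · by_cases hx' : x = j' <;> simp [hx, hx', h1, h2, hjj, Ne.symm hjj]
      rw [hf]
      have hval : (∑ k, p k * ∏ x ∈ ({j, j'} : Finset (Fin nc)), (1 - δ k (W x)))
          = η2 (W j) (W j') := by
        rw [hη2]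
        refine Finset.sum_congr rfl fun k _ => ?_
        rw [Finset.prod_pair hjj]
        ring
      rw [hval]
      simp [Finset.mem_inter, Finset.mem_sdiff, h1, h2]
    · have hf : univ.filter (fun x => i ∈ T x) = {j} := by
        ext x
        simp only [Finset.mem_filter, Finset.mem_univ, true_and, Finset.mem_singleton, hT]
        by_cases hx : x = j
        · simp [hx, h1, hjj, Ne.symm hjj]
        · by_cases hx' : x = j' <;> simp [hx, hx', h2, hjj, Ne.symm hjj]
      rw [hf]
      simp only [Finset.prod_singleton]
      rw [sum_p_one_sub p δ hp1 d hmax]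
      simp [Finset.mem_inter, Finset.mem_sdiff, h1, h2]
    · have hf : univ.filter (fun x => i ∈ T x) = {j'} := by
        ext x
        simp only [Finset.mem_filter, Finset.mem_univ, true_and, Finset.mem_singleton, hT]
        by_cases hx : x = j
        · simp [hx, h1, hjj, Ne.symm hjj]
        · by_cases hx' : x = j' <;> simp [hx, hx', h1, h2, hjj, Ne.symm hjj]
      rw [hf]
      simp only [Finset.prod_singleton]
      rw [sum_p_one_sub p δ hp1 d hmax]
      simp [Finset.mem_inter, Finset.mem_sdiff, h1, h2]
    · have hf : univ.filter (fun x => i ∈ T x) = ∅ := by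
        ext x
        simp only [Finset.mem_filter, Finset.mem_univ, true_and, Finset.notMem_empty,
          iff_false, hT]
        by_cases hx : x = j
        · simp [hx, h1, hjj, Ne.symm hjj]
        · by_cases hx' : x = j' <;> simp [hx, hx', h1, h2, hjj, Ne.symm hjj]
      rw [hf]
      simp [Finset.mem_inter, Finset.mem_sdiff, h1, h2, hp1]
  calc ∑ A : Fin nr → Fin nc → Bool, biSBMprob p r δ A * (ind S j A * ind S' j' A)
      = ∑ A : Fin nr → Fin nc → Bool, biSBMprob p r δ A * ∏ x, ind (T x) x A :=
        Finset.sum_congr rfl fun A _ => by rw [hTind A]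
    _ = ∑ W : Fin nc → Fin Qc, (∏ x, r (W x)) *
          ∏ i, ∑ k, p k * ∏ x ∈ univ.filter (fun x => i ∈ T x), (1 - δ k (W x)) :=
        master_bi p r δ T
    _ = ∑ W : Fin nc → Fin Qc, (∏ x, r (W x)) *
          ((1 - d) ^ (S \ S').card * ((1 - d) ^ (S' \ S).card *
            η2 (W j) (W j') ^ (S ∩ S').card)) := by
        refine Finset.sum_congr rfl fun W _ => ?_
        congr 1
        rw [Finset.prod_congr rfl fun i _ => hfac W i, Finset.prod_mul_distrib,
          Finset.prod_mul_distrib, Finset.prod_ite_mem, Finset.univ_inter,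
          Finset.prod_const, Finset.prod_ite_mem, Finset.univ_inter, Finset.prod_const,
          Finset.prod_ite_mem, Finset.univ_inter, Finset.prod_const]
        ring
    _ = ∑ q, ∑ q', r q * r q' *
          ((1 - d) ^ (S \ S').card * ((1 - d) ^ (S' \ S).card * η2 q q' ^ (S ∩ S').card)) :=
        marg r hr1 hjj (fun q q' => (1 - d) ^ (S \ S').card *
          ((1 - d) ^ (S' \ S).card * η2 q q' ^ (S ∩ S').card))

lemma ev_bi_one {nr nc Qr Qc : ℕ} (p : Fin Qr → ℝ) (r : Fin Qc → ℝ)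
    (δ : Fin Qr → Fin Qc → ℝ) (hp1 : ∑ k, p k = 1) (hr1 : ∑ q, r q = 1)
    (d : ℝ) (hmax : ∀ q, (∑ k, p k * δ k q) = d)
    (U : Finset (Fin nr)) (j : Fin nc) :
    ∑ A : Fin nr → Fin nc → Bool, biSBMprob p r δ A * ind U j A = (1 - d) ^ U.card := by
  classical
  set T : Fin nc → Finset (Fin nr) := fun x => if x = j then U else ∅ with hT
  have hTind : ∀ A : Fin nr → Fin nc → Bool, ind U j A = ∏ x, ind (T x) x A := by
    intro A
    have h : ∀ x : Fin nc, ind (T x) x A = (if x = j then ind U j A else 1) := by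
      intro x
      by_cases hx : x = j
      · subst hx; simp [hT]
      · simp [hT, hx, ind]
    rw [Finset.prod_congr rfl fun x _ => h x, prod_if_one]
  have hfac : ∀ (W : Fin nc → Fin Qc) (i : Fin nr),
      (∑ k, p k * ∏ x ∈ univ.filter (fun x => i ∈ T x), (1 - δ k (W x)))
      = (if i ∈ U then 1 - d else 1) := by
    intro W i
    by_cases h1 : i ∈ U
    · have hf : univ.filter (fun x => i ∈ T x) = {j} := by
        ext x
        simp only [Finset.mem_filter, Finset.mem_univ, true_and, Finset.mem_singleton, hT]
        by_cases hx : x = j <;> simp [hx, h1]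
      rw [hf]
      simp only [Finset.prod_singleton]
      rw [sum_p_one_sub p δ hp1 d hmax]
      simp [h1]
    · have hf : univ.filter (fun x => i ∈ T x) = ∅ := by
        ext x
        simp only [Finset.mem_filter, Finset.mem_univ, true_and, Finset.notMem_empty,
          iff_false, hT]
        by_cases hx : x = j <;> simp [hx, h1]
      rw [hf]
      simp [h1, hp1]
  have hW : ∑ W : Fin nc → Fin Qc, ∏ x, r (W x) = 1 := by
    rw [sum_fun_factor (fun _ t => r t)]
    simp [hr1]
  calc ∑ A : Fin nr → Fin nc → Bool, biSBMprob p r δ A * ind U j A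
      = ∑ A : Fin nr → Fin nc → Bool, biSBMprob p r δ A * ∏ x, ind (T x) x A :=
        Finset.sum_congr rfl fun A _ => by rw [← hTind A]
    _ = ∑ W : Fin nc → Fin Qc, (∏ x, r (W x)) *
          ∏ i, ∑ k, p k * ∏ x ∈ univ.filter (fun x => i ∈ T x), (1 - δ k (W x)) :=
        master_bi p r δ T
    _ = ∑ W : Fin nc → Fin Qc, (∏ x, r (W x)) * (1 - d) ^ U.card := by
        refine Finset.sum_congr rfl fun W _ => ?_
        congr 1
        rw [Finset.prod_congr rfl fun i _ => hfac W i, Finset.prod_ite_mem,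
          Finset.univ_inter, Finset.prod_const]
    _ = (1 - d) ^ U.card := by
        rw [← Finset.sum_mul, hW, one_mul]

lemma ev_er_two {nr nc : ℕ} (d : ℝ) (S S' : Finset (Fin nr)) {j j' : Fin nc} (hjj : j ≠ j') :
    ∑ A : Fin nr → Fin nc → Bool, ERprob d A * (ind S j A * ind S' j' A)
      = (1 - d) ^ (S.card + S'.card) := by
  classical
  set T : Fin nc → Finset (Fin nr) :=
    fun x => if x = j then S else if x = j' then S' else ∅ with hT
  have hTind : ∀ A : Fin nr → Fin nc → Bool,
      ind S j A * ind S' j' A = ∏ x, ind (T x) x A := by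
    intro A
    have h : ∀ x : Fin nc, ind (T x) x A
        = (if x = j then ind S j A else if x = j' then ind S' j' A else 1) := by
      intro x
      by_cases hx : x = j
      · subst hx; simp [hT, hjj]
      · by_cases hx' : x = j'
        · subst hx'; simp [hT, hx]
        · simp [hT, hx, hx', ind]
    rw [Finset.prod_congr rfl fun x _ => h x, prod_if_two hjj]
  calc ∑ A : Fin nr → Fin nc → Bool, ERprob d A * (ind S j A * ind S' j' A)
      = ∑ A : Fin nr → Fin nc → Bool, ERprob d A * ∏ x, ind (T x) x A :=
        Finset.sum_congr rfl fun A _ => by rw [hTind A]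
    _ = ∏ x, (1 - d) ^ (T x).card := master_er d T
    _ = (1 - d) ^ (S.card + S'.card) := by
        have h : ∀ x : Fin nc, (1 - d) ^ (T x).card
            = (if x = j then (1 - d) ^ S.card else if x = j' then (1 - d) ^ S'.card else 1) := by
          intro x
          by_cases hx : x = j
          · simp [hT, hx]
          · by_cases hx' : x = j' <;> simp [hT, hx, hx', Ne.symm hjj]
        rw [Finset.prod_congr rfl fun x _ => h x, prod_if_two hjj, ← pow_add]

lemma ev_er_one {nr nc : ℕ} (d : ℝ) (U : Finset (Fin nr)) (j : Fin nc) :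
    ∑ A : Fin nr → Fin nc → Bool, ERprob d A * ind U j A = (1 - d) ^ U.card := by
  classical
  set T : Fin nc → Finset (Fin nr) := fun x => if x = j then U else ∅ with hT
  have hTind : ∀ A : Fin nr → Fin nc → Bool, ind U j A = ∏ x, ind (T x) x A := by
    intro A
    have h : ∀ x : Fin nc, ind (T x) x A = (if x = j then ind U j A else 1) := by
      intro x
      by_cases hx : x = j
      · subst hx; simp [hT]
      · simp [hT, hx, ind]
    rw [Finset.prod_congr rfl fun x _ => h x, prod_if_one]
  calc ∑ A : Fin nr → Fin nc → Bool, ERprob d A * ind U j A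
      = ∑ A : Fin nr → Fin nc → Bool, ERprob d A * ∏ x, ind (T x) x A :=
        Finset.sum_congr rfl fun A _ => by rw [← hTind A]
    _ = ∏ x, (1 - d) ^ (T x).card := master_er d T
    _ = (1 - d) ^ U.card := by
        have h : ∀ x : Fin nc, (1 - d) ^ (T x).card
            = (if x = j then (1 - d) ^ U.card else 1) := by
          intro x
          by_cases hx : x = j <;> simp [hT, hx]
        rw [Finset.prod_congr rfl fun x _ => h x, prod_if_one]

lemma sum_er_one {nr nc : ℕ} (d : ℝ) :
    ∑ A : Fin nr → Fin nc → Bool, ERprob d A = 1 := by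
  have h := master_er (nr := nr) (nc := nc) d (fun _ => ∅)
  simpa [ind] using h

lemma sum_bi_one {nr nc Qr Qc : ℕ} (p : Fin Qr → ℝ) (r : Fin Qc → ℝ)
    (δ : Fin Qr → Fin Qc → ℝ) (hp1 : ∑ k, p k = 1) (hr1 : ∑ q, r q = 1) :
    ∑ A : Fin nr → Fin nc → Bool, biSBMprob p r δ A = 1 := by
  have h := master_bi (nr := nr) (nc := nc) p r δ (fun _ => ∅)
  have hW : ∑ W : Fin nc → Fin Qc, ∏ x, r (W x) = 1 := by
    rw [sum_fun_factor (fun _ t => r t)]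
    simp [hr1]
  simpa [ind, hp1, hW] using h

lemma ind_mul_same {nr nc : ℕ} (S S' : Finset (Fin nr)) (j : Fin nc)
    (A : Fin nr → Fin nc → Bool) :
    ind S j A * ind S' j A = ind (S ∪ S') j A := by
  classical
  by_cases h : ∃ i ∈ S ∩ S', A i j = true
  · obtain ⟨i, hi, hA⟩ := h
    rw [Finset.mem_inter] at hi
    rw [ind, ind, ind, Finset.prod_eq_zero hi.1 (by simp [hA]), zero_mul,
      Finset.prod_eq_zero (Finset.mem_union_left _ hi.1) (by simp [hA])]
  · push_neg at h
    rw [ind, ind, ind, ← Finset.prod_union_inter]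
    have h1 : ∏ i ∈ S ∩ S', (if A i j then (0:ℝ) else 1) = 1 :=
      Finset.prod_eq_one fun i hi => by simp [h i hi]
    rw [h1, mul_one]

noncomputable def robStatU' {nr nc : ℕ} (A : Fin nr → Fin nc → Bool) : ℝ :=
  (nr : ℝ)⁻¹ *
    ∑ m ∈ Finset.range (nr + 1),
      ((Nat.factorial nr : ℝ))⁻¹ * ∑ s : Equiv.Perm (Fin nr),
        (1 - (nc : ℝ)⁻¹ * ∑ j : Fin nc,
          (if ∀ i : Fin nr, m ≤ (i : ℕ) → A (s i) j = false then (1 : ℝ) else 0))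

def Sm {nr : ℕ} (s : Equiv.Perm (Fin nr)) (m : ℕ) : Finset (Fin nr) :=
  ((univ : Finset (Fin nr)).filter fun i : Fin nr => m ≤ (i : ℕ)).image s

lemma ite_eq_ind {nr nc : ℕ} (A : Fin nr → Fin nc → Bool) (s : Equiv.Perm (Fin nr))
    (m : ℕ) (j : Fin nc) :
    (if ∀ i : Fin nr, m ≤ (i : ℕ) → A (s i) j = false then (1 : ℝ) else 0)
      = ind (Sm s m) j A := by
  have hinj : ∀ x : Fin nr, x ∈ ((univ : Finset (Fin nr)).filter fun i : Fin nr => m ≤ (i : ℕ)) →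
      ∀ y : Fin nr, y ∈ ((univ : Finset (Fin nr)).filter fun i : Fin nr => m ≤ (i : ℕ)) →
      s x = s y → x = y := fun x _ y _ h => s.injective h
  rw [ind, Sm, Finset.prod_image hinj]
  by_cases h : ∀ i : Fin nr, m ≤ (i : ℕ) → A (s i) j = false
  · rw [if_pos h]
    symm
    refine Finset.prod_eq_one fun i hi => ?_
    have := h i (Finset.mem_filter.mp hi).2
    simp [this]
  · rw [if_neg h]
    push_neg at h
    obtain ⟨i, him, hA⟩ := h
    have hA' : A (s i) j = true := by revert hA; cases A (s i) j <;> simp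
    symm
    refine Finset.prod_eq_zero (Finset.mem_filter.mpr ⟨Finset.mem_univ _, him⟩) ?_
    simp [hA']

noncomputable def LL {nr nc : ℕ} (A : Fin nr → Fin nc → Bool) : ℝ :=
  ∑ α ∈ (Finset.range (nr+1)) ×ˢ
      ((univ : Finset (Equiv.Perm (Fin nr))) ×ˢ (univ : Finset (Fin nc))),
    ind (Sm α.2.1 α.1) α.2.2 A

lemma LL_eq {nr nc : ℕ} (A : Fin nr → Fin nc → Bool) :
    LL A = ∑ m ∈ Finset.range (nr+1), ∑ s : Equiv.Perm (Fin nr), ∑ j : Fin nc,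
      ind (Sm s m) j A := by
  rw [LL, Finset.sum_product]
  refine Finset.sum_congr rfl fun m _ => ?_
  rw [Finset.sum_product]

lemma rob_eq {nr nc : ℕ} (A : Fin nr → Fin nc → Bool) :
    robStatU' A = (nr:ℝ)⁻¹ * ((nr:ℝ)+1)
      - ((nr:ℝ)⁻¹ * ((Nat.factorial nr : ℝ))⁻¹ * (nc:ℝ)⁻¹) * LL A := by
  have hfac : ((Nat.factorial nr : ℝ)) ≠ 0 := Nat.cast_ne_zero.mpr (Nat.factorial_ne_zero nr)
  rw [LL_eq, robStatU']
  have h1 : ∀ m, (∑ s : Equiv.Perm (Fin nr),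
        (1 - (nc : ℝ)⁻¹ * ∑ j : Fin nc,
          (if ∀ i : Fin nr, m ≤ (i : ℕ) → A (s i) j = false then (1 : ℝ) else 0)))
      = (Nat.factorial nr : ℝ)
        - (nc:ℝ)⁻¹ * ∑ s : Equiv.Perm (Fin nr), ∑ j, ind (Sm s m) j A := by
    intro m
    have hpt : ∀ s : Equiv.Perm (Fin nr),
        (1 - (nc : ℝ)⁻¹ * ∑ j : Fin nc,
          (if ∀ i : Fin nr, m ≤ (i : ℕ) → A (s i) j = false then (1 : ℝ) else 0))
        = 1 - (nc:ℝ)⁻¹ * ∑ j, ind (Sm s m) j A := by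
      intro s
      congr 2
      exact Finset.sum_congr rfl fun j _ => ite_eq_ind A s m j
    rw [Finset.sum_congr rfl fun s _ => hpt s, Finset.sum_sub_distrib, Finset.sum_const,
      Finset.card_univ, Fintype.card_perm, Fintype.card_fin, ← Finset.mul_sum]
    simp [nsmul_eq_mul]
  simp only [h1]
  have h2 : ∀ m ∈ Finset.range (nr+1), (Nat.factorial nr : ℝ)⁻¹ *
      ((Nat.factorial nr : ℝ)
        - (nc:ℝ)⁻¹ * ∑ s : Equiv.Perm (Fin nr), ∑ j, ind (Sm s m) j A)
      = 1 - ((Nat.factorial nr : ℝ)⁻¹ * (nc:ℝ)⁻¹)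
          * ∑ s : Equiv.Perm (Fin nr), ∑ j, ind (Sm s m) j A := by
    intro m _
    rw [mul_sub, inv_mul_cancel₀ hfac]
    ring
  rw [Finset.sum_congr rfl h2, Finset.sum_sub_distrib, Finset.sum_const, Finset.card_range,
    ← Finset.mul_sum]
  simp only [nsmul_eq_mul, mul_one, Nat.cast_add, Nat.cast_one]
  ring

noncomputable def varRobStat' {nr nc : ℕ}
    (P : (Fin nr → Fin nc → Bool) → ℝ) : ℝ :=
  (∑ A : Fin nr → Fin nc → Bool, P A * (robStatU' A) ^ 2)
    - (∑ A : Fin nr → Fin nc → Bool, P A * robStatU' A) ^ 2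

lemma var_formula {nr nc : ℕ} (P : (Fin nr → Fin nc → Bool) → ℝ)
    (hP : ∑ A : Fin nr → Fin nc → Bool, P A = 1) (c w : ℝ)
    (X : (Fin nr → Fin nc → Bool) → ℝ)
    (hR : ∀ A : Fin nr → Fin nc → Bool, robStatU' A = c - w * X A) :
    varRobStat' P = w^2 * ((∑ A : Fin nr → Fin nc → Bool, P A * X A * X A)
      - (∑ A : Fin nr → Fin nc → Bool, P A * X A)^2) := by
  rw [varRobStat']
  simp only [hR]
  have e1 : ∑ A : Fin nr → Fin nc → Bool, P A * (c - w * X A)^2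
      = c^2 - 2*c*w*(∑ A : Fin nr → Fin nc → Bool, P A * X A)
        + w^2 * (∑ A : Fin nr → Fin nc → Bool, P A * X A * X A) := by
    have h : ∀ A, P A * (c - w * X A)^2
        = c^2 * P A - 2*c*w*(P A * X A) + w^2 * (P A * X A * X A) := fun A => by ring
    rw [Finset.sum_congr rfl fun A _ => h A, Finset.sum_add_distrib, Finset.sum_sub_distrib,
      ← Finset.mul_sum, ← Finset.mul_sum, ← Finset.mul_sum, hP, mul_one]
  have e2 : ∑ A : Fin nr → Fin nc → Bool, P A * (c - w * X A)
      = c - w * (∑ A : Fin nr → Fin nc → Bool, P A * X A) := by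
    have h : ∀ A, P A * (c - w * X A) = c * P A - w * (P A * X A) := fun A => by ring
    rw [Finset.sum_congr rfl fun A _ => h A, Finset.sum_sub_distrib,
      ← Finset.mul_sum, ← Finset.mul_sum, hP, mul_one]
  rw [e1, e2]
  ring

lemma expand1 {nr nc : ℕ} (P : (Fin nr → Fin nc → Bool) → ℝ) :
    ∑ A : Fin nr → Fin nc → Bool, P A * LL A
      = ∑ α ∈ (Finset.range (nr+1)) ×ˢ
          ((univ : Finset (Equiv.Perm (Fin nr))) ×ˢ (univ : Finset (Fin nc))),
          ∑ A : Fin nr → Fin nc → Bool, P A * ind (Sm α.2.1 α.1) α.2.2 A := by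
  calc ∑ A : Fin nr → Fin nc → Bool, P A * LL A
      = ∑ A : Fin nr → Fin nc → Bool, ∑ α ∈ (Finset.range (nr+1)) ×ˢ
          ((univ : Finset (Equiv.Perm (Fin nr))) ×ˢ (univ : Finset (Fin nc))),
          P A * ind (Sm α.2.1 α.1) α.2.2 A :=
        Finset.sum_congr rfl fun A _ => by rw [LL, Finset.mul_sum]
    _ = ∑ α ∈ (Finset.range (nr+1)) ×ˢ
          ((univ : Finset (Equiv.Perm (Fin nr))) ×ˢ (univ : Finset (Fin nc))),
          ∑ A : Fin nr → Fin nc → Bool, P A * ind (Sm α.2.1 α.1) α.2.2 A :=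
        Finset.sum_comm

lemma expand2 {nr nc : ℕ} (P : (Fin nr → Fin nc → Bool) → ℝ) :
    ∑ A : Fin nr → Fin nc → Bool, P A * LL A * LL A
      = ∑ α ∈ (Finset.range (nr+1)) ×ˢ
          ((univ : Finset (Equiv.Perm (Fin nr))) ×ˢ (univ : Finset (Fin nc))),
        ∑ β ∈ (Finset.range (nr+1)) ×ˢ
          ((univ : Finset (Equiv.Perm (Fin nr))) ×ˢ (univ : Finset (Fin nc))),
          ∑ A : Fin nr → Fin nc → Bool,
            P A * (ind (Sm α.2.1 α.1) α.2.2 A * ind (Sm β.2.1 β.1) β.2.2 A) := by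
  calc ∑ A : Fin nr → Fin nc → Bool, P A * LL A * LL A
      = ∑ A : Fin nr → Fin nc → Bool, ∑ α ∈ (Finset.range (nr+1)) ×ˢ
          ((univ : Finset (Equiv.Perm (Fin nr))) ×ˢ (univ : Finset (Fin nc))),
        ∑ β ∈ (Finset.range (nr+1)) ×ˢ
          ((univ : Finset (Equiv.Perm (Fin nr))) ×ˢ (univ : Finset (Fin nc))),
          P A * (ind (Sm α.2.1 α.1) α.2.2 A * ind (Sm β.2.1 β.1) β.2.2 A) := by
        refine Finset.sum_congr rfl fun A _ => ?_
        rw [mul_assoc, LL, Finset.sum_mul_sum, Finset.mul_sum]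
        exact Finset.sum_congr rfl fun α _ => by rw [Finset.mul_sum]
    _ = ∑ α ∈ (Finset.range (nr+1)) ×ˢ
          ((univ : Finset (Equiv.Perm (Fin nr))) ×ˢ (univ : Finset (Fin nc))),
        ∑ A : Fin nr → Fin nc → Bool,
        ∑ β ∈ (Finset.range (nr+1)) ×ˢ
          ((univ : Finset (Equiv.Perm (Fin nr))) ×ˢ (univ : Finset (Fin nc))),
          P A * (ind (Sm α.2.1 α.1) α.2.2 A * ind (Sm β.2.1 β.1) β.2.2 A) :=
        Finset.sum_comm
    _ = ∑ α ∈ (Finset.range (nr+1)) ×ˢ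
          ((univ : Finset (Equiv.Perm (Fin nr))) ×ˢ (univ : Finset (Fin nc))),
        ∑ β ∈ (Finset.range (nr+1)) ×ˢ
          ((univ : Finset (Equiv.Perm (Fin nr))) ×ˢ (univ : Finset (Fin nc))),
          ∑ A : Fin nr → Fin nc → Bool,
            P A * (ind (Sm α.2.1 α.1) α.2.2 A * ind (Sm β.2.1 β.1) β.2.2 A) :=
        Finset.sum_congr rfl fun α _ => Finset.sum_comm
lemma partA {Qr Qc : ℕ}
    (p : Fin Qr → ℝ) (r : Fin Qc → ℝ) (δ : Fin Qr → Fin Qc → ℝ)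
    (hp0 : ∀ k, 0 ≤ p k) (hp1 : ∑ k, p k = 1)
    (hr0 : ∀ q, 0 ≤ r q) (hr1 : ∑ q, r q = 1)
    (hδ : ∀ k q, 0 ≤ δ k q ∧ δ k q ≤ 1)
    (d : ℝ) (hd0 : 0 ≤ d) (hd1 : d ≤ 1)
    (hmax : ∀ q, (∑ k, p k * δ k q) = d)
    (η2 : Fin Qc → Fin Qc → ℝ)
    (hη2 : ∀ q q', η2 q q' = ∑ k, p k * (1 - δ k q) * (1 - δ k q')) :
    ∀ l m m' : ℕ, m ≤ l → m' ≤ l → l ≤ m + m' →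
        (1 - d) ^ (m + m')
          ≤ ∑ q, ∑ q', r q * r q' * (1 - d) ^ (l - m') * (1 - d) ^ (l - m) *
              η2 q q' ^ (m + m' - l) := by
  intro l m m' hm hm' hl
  have h1d : (0:ℝ) ≤ 1 - d := by linarith
  have hη2nn : ∀ q q', 0 ≤ η2 q q' := by
    intro q q'
    rw [hη2]
    apply Finset.sum_nonneg
    intro k _
    have h1 : 0 ≤ 1 - δ k q := by linarith [(hδ k q).2]
    have h2 : 0 ≤ 1 - δ k q' := by linarith [(hδ k q').2]
    have := hp0 k
    positivity
  -- mean of η2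
  have hmean : ∑ q, ∑ q', r q * r q' * η2 q q'
      = ∑ k, p k * (∑ q, r q * (1 - δ k q)) ^ 2 := by
    have : ∀ k, p k * (∑ q, r q * (1 - δ k q)) ^ 2
        = ∑ q, ∑ q', r q * r q' * (p k * (1 - δ k q) * (1 - δ k q')) := by
      intro k
      rw [sq, Finset.sum_mul_sum]
      rw [Finset.mul_sum]
      refine Finset.sum_congr rfl fun q _ => ?_
      rw [Finset.mul_sum]
      exact Finset.sum_congr rfl fun q' _ => by ring
    calc ∑ q, ∑ q', r q * r q' * η2 q q'
        = ∑ q, ∑ k, ∑ q', r q * r q' * (p k * (1 - δ k q) * (1 - δ k q')) := by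
          refine Finset.sum_congr rfl fun q _ => ?_
          rw [Finset.sum_comm]
          refine Finset.sum_congr rfl fun q' _ => ?_
          rw [hη2, Finset.mul_sum]
      _ = ∑ k, ∑ q, ∑ q', r q * r q' * (p k * (1 - δ k q) * (1 - δ k q')) :=
          by rw [Finset.sum_comm]
      _ = ∑ k, p k * (∑ q, r q * (1 - δ k q)) ^ 2 := by
          refine Finset.sum_congr rfl fun k _ => (this k).symm
  -- the mean of (∑ q, r q * (1 - δ k q)) under p is 1 - d
  have hu : ∑ k, p k * (∑ q, r q * (1 - δ k q)) = 1 - d := by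
    have h1 : ∀ k, p k * (∑ q, r q * (1 - δ k q))
        = ∑ q, (r q * p k - r q * (p k * δ k q)) := by
      intro k
      rw [Finset.mul_sum]
      refine Finset.sum_congr rfl fun q _ => by ring
    simp only [h1]
    rw [Finset.sum_comm]
    have h2 : ∀ q, ∑ k, (r q * p k - r q * (p k * δ k q)) = r q * (1 - d) := by
      intro q
      rw [Finset.sum_sub_distrib, ← Finset.mul_sum, ← Finset.mul_sum, hp1, hmax q]
      ring
    simp only [h2]
    rw [← Finset.sum_mul, hr1, one_mul]
  -- Cauchy–Schwarz: (1-d)^2 ≤ mean of η2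
  have hcs : (1 - d) ^ 2 ≤ ∑ q, ∑ q', r q * r q' * η2 q q' := by
    rw [hmean, ← hu]
    calc (∑ k, p k * (∑ q, r q * (1 - δ k q))) ^ 2
        = (∑ k, Real.sqrt (p k) * (Real.sqrt (p k) * (∑ q, r q * (1 - δ k q)))) ^ 2 := by
          refine congrArg (· ^ 2) (Finset.sum_congr rfl fun k _ => ?_)
          rw [← mul_assoc, Real.mul_self_sqrt (hp0 k)]
      _ ≤ (∑ k, Real.sqrt (p k) ^ 2) * ∑ k, (Real.sqrt (p k) * (∑ q, r q * (1 - δ k q))) ^ 2 :=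
          Finset.sum_mul_sq_le_sq_mul_sq _ _ _
      _ = ∑ k, p k * (∑ q, r q * (1 - δ k q)) ^ 2 := by
          rw [show ∑ k, Real.sqrt (p k) ^ 2 = 1 by
            simp only [Real.sq_sqrt (hp0 _)]; exact hp1, one_mul]
          refine Finset.sum_congr rfl fun k _ => ?_
          rw [mul_pow, Real.sq_sqrt (hp0 k)]
  -- Jensen: (mean of η2)^n ≤ mean of η2^n, over pairs
  set n : ℕ := m + m' - l with hn
  have hjensen : (∑ q, ∑ q', r q * r q' * η2 q q') ^ n
      ≤ ∑ q, ∑ q', r q * r q' * η2 q q' ^ n := by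
    have hconv : ConvexOn ℝ (Set.Ici 0) fun x : ℝ => x ^ n := convexOn_pow n
    have hw0 : ∀ x ∈ (univ : Finset (Fin Qc × Fin Qc)), 0 ≤ r x.1 * r x.2 :=
      fun x _ => mul_nonneg (hr0 _) (hr0 _)
    have hw1 : ∑ x : Fin Qc × Fin Qc, r x.1 * r x.2 = 1 := by
      rw [Fintype.sum_prod_type, ← Finset.sum_mul_sum, hr1]; ring
    have hmem : ∀ x ∈ (univ : Finset (Fin Qc × Fin Qc)), η2 x.1 x.2 ∈ Set.Ici (0:ℝ) :=
      fun x _ => hη2nn _ _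
    have := hconv.map_sum_le hw0 hw1 hmem
    simp only [smul_eq_mul] at this
    calc (∑ q, ∑ q', r q * r q' * η2 q q') ^ n
        = (∑ x : Fin Qc × Fin Qc, r x.1 * r x.2 * η2 x.1 x.2) ^ n := by
          rw [Fintype.sum_prod_type]
      _ ≤ ∑ x : Fin Qc × Fin Qc, r x.1 * r x.2 * η2 x.1 x.2 ^ n := this
      _ = ∑ q, ∑ q', r q * r q' * η2 q q' ^ n := by rw [Fintype.sum_prod_type]
  -- assemble
  have key : ((1 - d) ^ 2) ^ n ≤ ∑ q, ∑ q', r q * r q' * η2 q q' ^ n :=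
    le_trans (pow_le_pow_left₀ (sq_nonneg _) hcs n) hjensen
  have hC : (1 - d) ^ (m + m') = (1 - d) ^ ((l - m') + (l - m)) * ((1 - d) ^ 2) ^ n := by
    rw [← pow_mul, ← pow_add]
    congr 1
    omega
  calc (1 - d) ^ (m + m')
      ≤ (1 - d) ^ ((l - m') + (l - m)) * ∑ q, ∑ q', r q * r q' * η2 q q' ^ n := by
        rw [hC]
        exact mul_le_mul_of_nonneg_left key (pow_nonneg h1d _)
    _ = ∑ q, ∑ q', r q * r q' * (1 - d) ^ (l - m') * (1 - d) ^ (l - m) * η2 q q' ^ n := by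
        rw [Finset.mul_sum]
        refine Finset.sum_congr rfl fun q _ => ?_
        rw [Finset.mul_sum]
        refine Finset.sum_congr rfl fun q' _ => ?_
        rw [pow_add]
        ring

lemma ev_compare {nr nc Qr Qc : ℕ}
    (p : Fin Qr → ℝ) (r : Fin Qc → ℝ) (δ : Fin Qr → Fin Qc → ℝ)
    (hp0 : ∀ k, 0 ≤ p k) (hp1 : ∑ k, p k = 1)
    (hr0 : ∀ q, 0 ≤ r q) (hr1 : ∑ q, r q = 1)
    (hδ : ∀ k q, 0 ≤ δ k q ∧ δ k q ≤ 1)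
    (d : ℝ) (hd0 : 0 ≤ d) (hd1 : d ≤ 1)
    (hmax : ∀ q, (∑ k, p k * δ k q) = d)
    (η2 : Fin Qc → Fin Qc → ℝ)
    (hη2 : ∀ q q', η2 q q' = ∑ k, p k * (1 - δ k q) * (1 - δ k q'))
    (S S' : Finset (Fin nr)) (j j' : Fin nc) :
    ∑ A : Fin nr → Fin nc → Bool, ERprob d A * (ind S j A * ind S' j' A)
      ≤ ∑ A : Fin nr → Fin nc → Bool, biSBMprob p r δ A * (ind S j A * ind S' j' A) := by
  by_cases hjj : j = j'
  · subst hjj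
    refine le_of_eq ?_
    calc ∑ A : Fin nr → Fin nc → Bool, ERprob d A * (ind S j A * ind S' j A)
        = ∑ A : Fin nr → Fin nc → Bool, ERprob d A * ind (S ∪ S') j A :=
          Finset.sum_congr rfl fun A _ => by rw [ind_mul_same]
      _ = (1 - d) ^ (S ∪ S').card := ev_er_one d (S ∪ S') j
      _ = ∑ A : Fin nr → Fin nc → Bool, biSBMprob p r δ A * ind (S ∪ S') j A :=
          (ev_bi_one p r δ hp1 hr1 d hmax (S ∪ S') j).symm
      _ = ∑ A : Fin nr → Fin nc → Bool, biSBMprob p r δ A * (ind S j A * ind S' j A) :=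
          Finset.sum_congr rfl fun A _ => by rw [ind_mul_same]
  · rw [ev_er_two d S S' hjj, ev_bi_two p r δ hp1 hr1 d hmax η2 hη2 S S' hjj]
    have hm : S.card ≤ (S ∪ S').card := Finset.card_le_card Finset.subset_union_left
    have hm' : S'.card ≤ (S ∪ S').card := Finset.card_le_card Finset.subset_union_right
    have hl : (S ∪ S').card ≤ S.card + S'.card := Finset.card_union_le S S'
    have hA := partA p r δ hp0 hp1 hr0 hr1 hδ d hd0 hd1 hmax η2 hη2
      (S ∪ S').card S.card S'.card hm hm' hl
    have e1 : (S \ S').card = (S ∪ S').card - S'.card := by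
      have := Finset.card_sdiff_add_card S S'; omega
    have e2 : (S' \ S).card = (S ∪ S').card - S.card := by
      have := Finset.card_sdiff_add_card S' S
      rw [Finset.union_comm] at this; omega
    have e3 : (S ∩ S').card = S.card + S'.card - (S ∪ S').card := by
      have := Finset.card_union_add_card_inter S S'; omega
    rw [e1, e2, e3]
    refine le_trans hA (le_of_eq ?_)
    exact Finset.sum_congr rfl fun q _ => Finset.sum_congr rfl fun q' _ => by ring

theorem partC {nr nc Qr Qc : ℕ}
    (p : Fin Qr → ℝ) (r : Fin Qc → ℝ) (δ : Fin Qr → Fin Qc → ℝ)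
    (hp0 : ∀ k, 0 ≤ p k) (hp1 : ∑ k, p k = 1)
    (hr0 : ∀ q, 0 ≤ r q) (hr1 : ∑ q, r q = 1)
    (hδ : ∀ k q, 0 ≤ δ k q ∧ δ k q ≤ 1)
    (d : ℝ) (hd0 : 0 ≤ d) (hd1 : d ≤ 1)
    (hmax : ∀ q, (∑ k, p k * δ k q) = d)
    (η2 : Fin Qc → Fin Qc → ℝ)
    (hη2 : ∀ q q', η2 q q' = ∑ k, p k * (1 - δ k q) * (1 - δ k q')) :
    varRobStat' (ERprob d : (Fin nr → Fin nc → Bool) → ℝ)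
      ≤ varRobStat' (biSBMprob p r δ : (Fin nr → Fin nc → Bool) → ℝ) := by
  set c0 : ℝ := (nr:ℝ)⁻¹ * ((nr:ℝ)+1) with hc0
  set w : ℝ := (nr:ℝ)⁻¹ * ((Nat.factorial nr : ℝ))⁻¹ * (nc:ℝ)⁻¹ with hw
  have hR : ∀ A : Fin nr → Fin nc → Bool, robStatU' A = c0 - w * LL A := fun A => rob_eq A
  rw [var_formula (ERprob d) (sum_er_one d) c0 w LL hR,
    var_formula (biSBMprob p r δ) (sum_bi_one p r δ hp1 hr1) c0 w LL hR]
  have hE1 : (∑ A : Fin nr → Fin nc → Bool, ERprob d A * LL A)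
      = ∑ A : Fin nr → Fin nc → Bool, biSBMprob p r δ A * LL A := by
    rw [expand1, expand1]
    refine Finset.sum_congr rfl fun α _ => ?_
    rw [ev_er_one d (Sm α.2.1 α.1) α.2.2, ev_bi_one p r δ hp1 hr1 d hmax (Sm α.2.1 α.1) α.2.2]
  have hE2 : (∑ A : Fin nr → Fin nc → Bool, ERprob d A * LL A * LL A)
      ≤ ∑ A : Fin nr → Fin nc → Bool, biSBMprob p r δ A * LL A * LL A := by
    rw [expand2, expand2]
    refine Finset.sum_le_sum fun α _ => Finset.sum_le_sum fun β _ => ?_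
    exact ev_compare p r δ hp0 hp1 hr0 hr1 hδ d hd0 hd1 hmax η2 hη2
      (Sm α.2.1 α.1) (Sm β.2.1 β.1) α.2.2 β.2.2
  rw [hE1]
  have := sub_le_sub_right hE2
    ((∑ A : Fin nr → Fin nc → Bool, biSBMprob p r δ A * LL A)^2)
  exact mul_le_mul_of_nonneg_left this (sq_nonneg w)

lemma partB {Qr Qc : ℕ}
    (p : Fin Qr → ℝ) (r : Fin Qc → ℝ) (δ : Fin Qr → Fin Qc → ℝ)
    (hp1 : ∑ k, p k = 1) (hr1 : ∑ q, r q = 1)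
    (d : ℝ)
    (η2 : Fin Qc → Fin Qc → ℝ)
    (hη2 : ∀ q q', η2 q q' = ∑ k, p k * (1 - δ k q) * (1 - δ k q')) :
    (∀ k q, δ k q = d) → ∀ l m m' : ℕ, m ≤ l → m' ≤ l → l ≤ m + m' →
        (∑ q, ∑ q', r q * r q' * (1 - d) ^ (l - m') * (1 - d) ^ (l - m) *
            η2 q q' ^ (m + m' - l))
          = (1 - d) ^ (m + m') := by
  intro hER l m m' hm hm' hl
  have hη2c : ∀ q q' : Fin Qc, η2 q q' = (1 - d) ^ 2 := by
    intro q q'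
    rw [hη2]
    simp only [hER]
    have : ∀ k : Fin Qr, p k * (1 - d) * (1 - d) = p k * ((1-d)*(1-d)) := fun k => by ring
    rw [Finset.sum_congr rfl fun k _ => this k, ← Finset.sum_mul, hp1, one_mul, sq]
  have hX : (1 - d) ^ (l - m') * (1 - d) ^ (l - m) * ((1 - d) ^ 2) ^ (m + m' - l)
      = (1 - d) ^ (m + m') := by
    rw [← pow_mul, ← pow_add, ← pow_add]
    congr 1
    omega
  calc ∑ q, ∑ q', r q * r q' * (1 - d) ^ (l - m') * (1 - d) ^ (l - m) *
          η2 q q' ^ (m + m' - l)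
      = ∑ q, ∑ q', r q * r q' * (1 - d) ^ (m + m') := by
        refine Finset.sum_congr rfl fun q _ => Finset.sum_congr rfl fun q' _ => ?_
        rw [hη2c, ← hX]
        ring
    _ = (1 - d) ^ (m + m') := by
        simp only [← Finset.sum_mul]
        rw [← Finset.sum_mul_sum, hr1]
        ring

lemma robStatU_eq {nr nc : ℕ} (A : Fin nr → Fin nc → Bool) :
    robStatU A = robStatU' A := rfl

lemma varRobStat_eq {nr nc : ℕ} (P : (Fin nr → Fin nc → Bool) → ℝ) :
    varRobStat P = varRobStat' P := by
  rw [varRobStat, varRobStat']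
  simp only [robStatU_eq]

theorem stmt_15 {nr nc Qr Qc : ℕ}
    (p : Fin Qr → ℝ) (r : Fin Qc → ℝ) (δ : Fin Qr → Fin Qc → ℝ)
    (hp0 : ∀ k, 0 ≤ p k) (hp1 : ∑ k, p k = 1)
    (hr0 : ∀ q, 0 ≤ r q) (hr1 : ∑ q, r q = 1)
    (hδ : ∀ k q, 0 ≤ δ k q ∧ δ k q ≤ 1)
    (d : ℝ) (hd0 : 0 ≤ d) (hd1 : d ≤ 1)
    -- θ ∈ Θ^max_{d,n_r} : constant column-averaged connectivity
    (hmax : ∀ q, (∑ k, p k * δ k q) = d)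
    (η2 : Fin Qc → Fin Qc → ℝ)
    (hη2 : ∀ q q', η2 q q' = ∑ k, p k * (1 - δ k q) * (1 - δ k q')) :
    -- (a) Jensen lower bound for the key quantity
    (∀ l m m' : ℕ, m ≤ l → m' ≤ l → l ≤ m + m' →
        (1 - d) ^ (m + m')
          ≤ ∑ q, ∑ q', r q * r q' * (1 - d) ^ (l - m') * (1 - d) ^ (l - m) *
              η2 q q' ^ (m + m' - l)) ∧
      -- (b) equality for the Erdős–Rényi parametrization
      ((∀ k q, δ k q = d) → ∀ l m m' : ℕ, m ≤ l → m' ≤ l → l ≤ m + m' →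
        (∑ q, ∑ q', r q * r q' * (1 - d) ^ (l - m') * (1 - d) ^ (l - m) *
            η2 q q' ^ (m + m' - l))
          = (1 - d) ^ (m + m')) ∧
      -- (c) consequently Erdős–Rényi minimizes the variance of the
      -- robustness statistic among parameters in Θ^max_{d,n_r}
      varRobStat (ERprob d : (Fin nr → Fin nc → Bool) → ℝ)
        ≤ varRobStat (biSBMprob p r δ : (Fin nr → Fin nc → Bool) → ℝ) := by
  refine ⟨partA p r δ hp0 hp1 hr0 hr1 hδ d hd0 hd1 hmax η2 hη2,
    partB p r δ hp1 hr1 d η2 hη2, ?_⟩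
  rw [varRobStat_eq, varRobStat_eq]
  exact partC p r δ hp0 hp1 hr0 hr1 hδ d hd0 hd1 hmax η2 hη2
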